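/- Concave-convex regret decomposition, consumption part (Proposition C.2): Let g : ℝ^D → ℝ be L-Lipschitz with respect to the ℓ1 norm, where D is a finite index set. Fix a true transition function p★ and true consumptions c★_i : S × A → [0,1] for i ∈ D, estimates p̂ and (ĉ_i)_{i∈D}, and a bonus b : S × A → ℝ. Suppose a policy π_k and consumption functions c^{(k)}_i with |c^{(k)}_i(s,a) − ĉ_i(s,a)| ≤ b(s,a) satisfy g( (V_{c^{(k)}_i}^{π_k,p̂}(s0,1))_{i∈D} ) ≤ 0. Then g( (V_{c★_i}^{π_k,p★}(s0,1))_{i∈D} ) ≤ L · Σ_{i∈D} E^{π_k,p★}[ Σ_{h=1}^H | Bell_{c^{(k)}_i}^{π_k,p̂}(s_h, a_h, h) | | s_1 = s0 ], where the Bellman error for index i is taken with respect to the true pair (p★, c★_i). -/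

import Mathlib

open Finset

section MDPDefs

variable {S A : Type*} [Fintype S] [Fintype A]

/-- Expected cumulative sum of a step-dependent objective `φ h s a`, defined by
backward recursion on the number `n` of remaining steps, where `h` is the current stage. -/
noncomputable def EValAux (π : ℕ → S → PMF A) (p : S → A → PMF S)
    (φ : ℕ → S → A → ℝ) : ℕ → ℕ → S → ℝ
  | 0, _, _ => 0
  | n + 1, h, s =>
      ∑ a : A, (π h s a).toReal *
        (φ h s a + ∑ s' : S, (p s a s').toReal * EValAux π p φ n (h + 1) s')

/-- `EVal H π p φ h s = E^{π,p}[ Σ_{h'=h}^H φ(h', s_{h'}, a_{h'}) | s_h = s ]`. -/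
noncomputable def EVal (H : ℕ) (π : ℕ → S → PMF A) (p : S → A → PMF S)
    (φ : ℕ → S → A → ℝ) (h : ℕ) (s : S) : ℝ :=
  EValAux π p φ (H + 1 - h) h s

/-- Value function `V_m^{π,p}(s,h)` of the objective `m` for horizon `H`. -/
noncomputable def Vf (H : ℕ) (π : ℕ → S → PMF A) (p : S → A → PMF S)
    (m : S → A → ℝ) (h : ℕ) (s : S) : ℝ :=
  EVal H π p (fun _ s a => m s a) h s

/-- Q-function `Q_m^{π,p}(s,a,h)` of the objective `m` for horizon `H`. -/
noncomputable def Qf (H : ℕ) (π : ℕ → S → PMF A) (p : S → A → PMF S)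
    (m : S → A → ℝ) (h : ℕ) (s : S) (a : A) : ℝ :=
  m s a + ∑ s' : S, (p s a s').toReal * Vf H π p m (h + 1) s'

/-- Bellman error of the model `(p, m)` under policy `π`, with respect to the
true transition function `pstar` and true objective `mstar`. -/
noncomputable def Bell (H : ℕ) (π : ℕ → S → PMF A) (p : S → A → PMF S) (m : S → A → ℝ)
    (pstar : S → A → PMF S) (mstar : S → A → ℝ) (h : ℕ) (s : S) (a : A) : ℝ :=
  Qf H π p m h s a - (mstar s a + ∑ s' : S, (pstar s a s').toReal * Vf H π p m (h + 1) s')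

end MDPDefs

/-!
Simulation lemma: the gap between the value of an objective `m` in the model `p̂` and the value
of the true objective under `p★` telescopes into the expected sum, along trajectories of `p★`,
of the Bellman errors of `(p̂, m)`. Bounding each gap by the expected absolute Bellman error and
using the `ℓ¹`-Lipschitz property of `g` at the feasible point of the model gives the bound.
-/

section SimulationLemma

variable {S A : Type*} [Fintype S] [Fintype A]
  (π : ℕ → S → PMF A) (phat pstar : S → A → PMF S)

/-- The invariant `h + n = H + 1` says that `n` steps remain at stage `h`, which is what lets the
`Vf H` inside `Bell` unfold to `EValAux` with `n - 1` steps at stage `h + 1`. -/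
theorem EValAux_sub_EValAux_eq_EValAux_Bell (m mstar : S → A → ℝ) {H : ℕ} :
    ∀ n h, h + n = H + 1 → ∀ s : S,
      EValAux π phat (fun _ s a => m s a) n h s - EValAux π pstar (fun _ s a => mstar s a) n h s
        = EValAux π pstar (Bell H π phat m pstar mstar) n h s := by
  intro n
  induction n with
  | zero => simp [EValAux]
  | succ n ih =>
    intro h hh s
    have hVf : ∀ s', Vf H π phat m (h + 1) s' = EValAux π phat (fun _ s a => m s a) n (h + 1) s' :=
      fun s' => by rw [Vf, EVal, show H + 1 - (h + 1) = n by omega]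
    simp only [EValAux, ← ih (h + 1) (by omega), Bell, Qf, hVf, ← Finset.sum_sub_distrib,
      ← mul_sub]
    refine Finset.sum_congr rfl fun a _ => ?_
    simp only [mul_sub, Finset.sum_sub_distrib]
    ring

theorem Vf_sub_Vf_eq_EVal_Bell (m mstar : S → A → ℝ) {H h : ℕ} (hh : h ≤ H + 1) (s : S) :
    Vf H π phat m h s - Vf H π pstar mstar h s = EVal H π pstar (Bell H π phat m pstar mstar) h s :=
  EValAux_sub_EValAux_eq_EValAux_Bell π phat pstar m mstar _ h (by omega) s

end SimulationLemma

theorem abs_sum_toReal_mul_le {ι : Type*} [Fintype ι] (w : ι → ENNReal) {f g : ι → ℝ}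
    (hfg : ∀ i, |f i| ≤ g i) : |∑ i, (w i).toReal * f i| ≤ ∑ i, (w i).toReal * g i := by
  refine (Finset.abs_sum_le_sum_abs _ _).trans (Finset.sum_le_sum fun i _ => ?_)
  rw [abs_mul, ENNReal.abs_toReal]
  exact mul_le_mul_of_nonneg_left (hfg i) ENNReal.toReal_nonneg

section AbsEVal

variable {S A : Type*} [Fintype S] [Fintype A]
  (π : ℕ → S → PMF A) (p : S → A → PMF S) (φ : ℕ → S → A → ℝ)

theorem abs_EValAux_le :
    ∀ n h (s : S), |EValAux π p φ n h s| ≤ EValAux π p (fun h s a => |φ h s a|) n h s := by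
  intro n
  induction n with
  | zero => simp [EValAux]
  | succ n ih =>
    intro h s
    exact abs_sum_toReal_mul_le _ fun a => (abs_add_le _ _).trans
      (add_le_add_right (abs_sum_toReal_mul_le _ fun s' => ih (h + 1) s') _)

theorem abs_EVal_le (H h : ℕ) (s : S) :
    |EVal H π p φ h s| ≤ EVal H π p (fun h s a => |φ h s a|) h s :=
  abs_EValAux_le π p φ _ h s

end AbsEVal

theorem abs_Vf_sub_Vf_le_EVal_abs_Bell {S A : Type*} [Fintype S] [Fintype A]
    (π : ℕ → S → PMF A) (phat pstar : S → A → PMF S) (m mstar : S → A → ℝ) {H h : ℕ}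
    (hh : h ≤ H + 1) (s : S) :
    |Vf H π pstar mstar h s - Vf H π phat m h s|
      ≤ EVal H π pstar (fun h s a => |Bell H π phat m pstar mstar h s a|) h s := by
  rw [abs_sub_comm, Vf_sub_Vf_eq_EVal_Bell π phat pstar m mstar hh]
  exact abs_EVal_le π pstar _ H h s

section LipschitzL1

variable {D : Type*} [Fintype D] {g : (D → ℝ) → ℝ} {L : ℝ}

theorem nonneg_of_abs_sub_le_mul_sum_abs [Nonempty D]
    (hg : ∀ x y : D → ℝ, |g x - g y| ≤ L * ∑ i, |x i - y i|) : 0 ≤ L := by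
  classical
  obtain ⟨i⟩ := ‹Nonempty D›
  have h := hg 0 (Pi.single i 1)
  simp only [Pi.zero_apply, zero_sub, abs_neg] at h
  rw [Finset.sum_eq_single i (fun j _ hj => by simp [hj]) (by simp)] at h
  simpa using (abs_nonneg _).trans h

theorem le_add_mul_sum_of_abs_sub_le_mul_sum_abs
    (hg : ∀ x y : D → ℝ, |g x - g y| ≤ L * ∑ i, |x i - y i|) {x y e : D → ℝ}
    (hxy : ∀ i, |x i - y i| ≤ e i) :
    g x ≤ g y + L * ∑ i, e i := by
  cases isEmpty_or_nonempty D
  · simp [Subsingleton.elim x y]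
  · have hL := nonneg_of_abs_sub_le_mul_sum_abs hg
    calc g x ≤ g y + L * ∑ i, |x i - y i| := by linarith [le_abs_self (g x - g y), hg x y]
      _ ≤ g y + L * ∑ i, e i := by gcongr with i; exact hxy i

end LipschitzL1

theorem concave_convex_regret_decomposition_consumption_general
    {S A D : Type*} [Fintype S] [Fintype A] [Fintype D]
    (H : ℕ) (s0 : S) (L : ℝ)
    (g : (D → ℝ) → ℝ)
    -- g is L-Lipschitz with respect to the ℓ1 norm
    (hg : ∀ x y : D → ℝ, |g x - g y| ≤ L * ∑ i : D, |x i - y i|)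
    (pstar phat : S → A → PMF S)
    (cstar : D → S → A → ℝ)
    (πk : ℕ → S → PMF A) (ck : D → S → A → ℝ)
    (hfeas_k : g (fun i => Vf H πk phat (ck i) 1 s0) ≤ 0) :
    g (fun i => Vf H πk pstar (cstar i) 1 s0)
      ≤ L * ∑ i : D,
          EVal H πk pstar
            (fun h s a => |Bell H πk phat (ck i) pstar (cstar i) h s a|) 1 s0 := by
  have hgap := le_add_mul_sum_of_abs_sub_le_mul_sum_abs hg fun i =>
    abs_Vf_sub_Vf_le_EVal_abs_Bell πk phat pstar (ck i) (cstar i) (by omega : 1 ≤ H + 1) s0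
  linarith

/-- **Concave-convex regret decomposition, consumption part (Proposition C.2).** -/
theorem concave_convex_regret_decomposition_consumption
    {S A D : Type*} [Fintype S] [Fintype A] [Fintype D] [Nonempty S] [Nonempty A]
    (H : ℕ) (s0 : S) (L : ℝ)
    (g : (D → ℝ) → ℝ)
    -- g is L-Lipschitz with respect to the ℓ1 norm
    (hg : ∀ x y : D → ℝ, |g x - g y| ≤ L * ∑ i : D, |x i - y i|)
    (pstar phat : S → A → PMF S)
    (cstar chat : D → S → A → ℝ) (b : S → A → ℝ)
    (hcstar : ∀ i s a, cstar i s a ∈ Set.Icc (0 : ℝ) 1)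
    (πk : ℕ → S → PMF A) (ck : D → S → A → ℝ)
    (hck : ∀ i s a, |ck i s a - chat i s a| ≤ b s a)
    (hfeas_k : g (fun i => Vf H πk phat (ck i) 1 s0) ≤ 0) :
    g (fun i => Vf H πk pstar (cstar i) 1 s0)
      ≤ L * ∑ i : D,
          EVal H πk pstar
            (fun h s a => |Bell H πk phat (ck i) pstar (cstar i) h s a|) 1 s0 :=
  concave_convex_regret_decomposition_consumption_general H s0 L g hg pstar phat cstar πk ck hfeas_k
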